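/- For a Gabor matrix $G = [M^n T^k c]_{(k,n) \in \mathbb{Z}_L \times \mathbb{Z}_L}$ with window $c \in \mathbb{C}^L$ and a symmetric pattern $\Lambda \subseteq (\mathbb{Z}_L \times \mathbb{Z}_L)^2$: if $\Lambda \supseteq (\Gamma_1 \times \Gamma_1) \cup (\Gamma_2 \times \Gamma_2)$ for disjoint $\Gamma_1, \Gamma_2$ with $|\Gamma_1| + |\Gamma_2| > L$, then for every choice of window $c$, the columns of $\overline{G} \otimes G$ indexed by $\Lambda$ are linearly dependent. -/

import Mathlib

open Complex

/-- The character value `e^{2πi x / L}` for `x : ZMod L`. -/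
noncomputable def zchar (L : ℕ) [NeZero L] (x : ZMod L) : ℂ :=
  Complex.exp (2 * (Real.pi : ℂ) * Complex.I * (x.val : ℂ) / (L : ℂ))

/-- The Gabor atom `M^n T^k c`, i.e. `m ↦ e^{2πi n m / L} c[m-k]`. -/
noncomputable def gaborAtom (L : ℕ) [NeZero L] (c : ZMod L → ℂ) (k n : ZMod L) :
    ZMod L → ℂ :=
  fun m => zchar L (n * m) * c (m - k)

/-- The column of `conj G ⊗ G` of the Gabor matrix `G = [M^n T^k c]`, indexed by a pair of
time-frequency indices. -/
noncomputable def gaborKronCol (L : ℕ) [NeZero L] (c : ZMod L → ℂ)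
    (ll : (ZMod L × ZMod L) × (ZMod L × ZMod L)) : ZMod L × ZMod L → ℂ :=
  fun ii => (starRingEnd ℂ) (gaborAtom L c ll.1.1 ll.1.2 ii.1) *
    gaborAtom L c ll.2.1 ll.2.2 ii.2

/-! If `|Γ₁| + |Γ₂|` exceeds the rank of `G`, the atoms indexed by `Γ₁ ∪ Γ₂` satisfy a nontrivial
relation, which splits as `w₁ + w₂ = 0` with `wᵢ = ∑_{l ∈ Γᵢ} aₗ gₗ`. The Hermitian matrix
`N = a₁ a₁* - a₂ a₂*` is then nonzero, supported on `Γ₁ × Γ₁ ∪ Γ₂ × Γ₂`, and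
`G N G* = w₁ w₁* - w₂ w₂* = 0`; the entries of `G N G*` are the combination
`∑ₚ Nₚ (conj G ⊗ G)ₚ` of the Kronecker columns, which is therefore a dependence among the
columns indexed by any pattern containing the support of `N`. -/

open Finset Function Module Submodule

section LinearDependence

variable {M ι : Type*} [AddCommGroup M] [Fintype ι]

theorem not_linearIndependent_subtype_iff {R : Type*} [Ring R] [Module R M] {v : ι → M}
    {s : Set ι} :
    ¬ LinearIndependent R (fun x : s => v x) ↔
      ∃ a : ι → R, a ≠ 0 ∧ support a ⊆ s ∧ ∑ i, a i • v i = 0 := by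
  classical
  rw [← Function.comp_def, linearIndependent_comp_subtype_iff, linearDepOn_iff']
  constructor
  · rintro ⟨f, hfs, hf, hf0⟩
    refine ⟨f, Finsupp.coe_eq_zero.not.mpr hf0,
      Finsupp.fun_support_eq f ▸ (Finsupp.mem_supported _ _).mp hfs, ?_⟩
    rwa [Finsupp.linearCombination_apply, Finsupp.sum_fintype _ _ (by simp)] at hf
  · rintro ⟨a, ha0, has, ha⟩
    set f := Finsupp.equivFunOnFinite.symm a
    have hfa : ⇑f = a := Finsupp.coe_equivFunOnFinite_symm a
    refine ⟨f, (Finsupp.mem_supported _ _).mpr ?_, ?_, fun hf => ha0 (by rw [← hfa, hf]; rfl)⟩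
    · rwa [← Finsupp.fun_support_eq, hfa]
    · rwa [Finsupp.linearCombination_apply, Finsupp.sum_fintype _ _ (by simp), hfa]

theorem not_linearIndependent_subtype_of_finrank_span_lt {K : Type*} [Field K] [Module K M]
    (v : ι → M) (s : Finset ι) (h : finrank K (span K (Set.range v)) < #s) :
    ¬ LinearIndependent K (fun x : (s : Set ι) => v x) := by
  intro hli
  have hcard : finrank K (span K (Set.range fun x : (s : Set ι) => v x)) = #s := by
    rw [finrank_span_eq_card hli]; simp
  have := Module.Finite.span_of_finite K (Set.finite_range v)
  have hmono := Submodule.finrank_mono (span_mono (R := K)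
    (Set.range_comp_subset_range (Subtype.val : ↥(s : Set ι) → ι) v))
  exact h.not_ge (hcard.symm.trans_le hmono)

end LinearDependence

section KroneckerColumns

variable {𝕜 ι κ : Type*}

def kronCol [CommSemiring 𝕜] [StarRing 𝕜] (v : ι → κ → 𝕜) (p : ι × ι) : κ × κ → 𝕜 :=
  fun ij => starRingEnd 𝕜 (v p.1 ij.1) * v p.2 ij.2

def outerProduct [CommSemiring 𝕜] [StarRing 𝕜] (b : ι → 𝕜) (p : ι × ι) : 𝕜 :=
  starRingEnd 𝕜 (b p.1) * b p.2

theorem support_outerProduct_subset [CommSemiring 𝕜] [StarRing 𝕜] (b : ι → 𝕜) :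
    support (outerProduct b) ⊆ support b ×ˢ support b := by
  intro p hp
  simp only [mem_support, outerProduct] at hp
  exact ⟨fun h => hp (by simp [h]), fun h => hp (by simp [h])⟩

theorem sum_outerProduct_smul_kronCol [Fintype ι] [CommSemiring 𝕜] [StarRing 𝕜] (v : ι → κ → 𝕜)
    (b : ι → 𝕜) :
    ∑ p, outerProduct b p • kronCol v p =
      fun ij => starRingEnd 𝕜 ((∑ l, b l • v l) ij.1) * (∑ l, b l • v l) ij.2 := by
  funext ij
  simp only [Finset.sum_apply, Pi.smul_apply, smul_eq_mul, map_sum, map_mul, Finset.sum_mul_sum,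
    Fintype.sum_prod_type, outerProduct, kronCol]
  exact Finset.sum_congr rfl fun _ _ => Finset.sum_congr rfl fun _ _ => by ring

theorem sum_outerProduct_sub_smul_kronCol_eq_zero [Fintype ι] [CommRing 𝕜] [StarRing 𝕜]
    (v : ι → κ → 𝕜) {b₁ b₂ : ι → 𝕜} (h : ∑ l, b₁ l • v l + ∑ l, b₂ l • v l = 0) :
    ∑ p, (outerProduct b₁ p - outerProduct b₂ p) • kronCol v p = 0 := by
  simp only [sub_smul, Finset.sum_sub_distrib, sum_outerProduct_smul_kronCol,
    eq_neg_of_add_eq_zero_right h, Pi.neg_apply, map_neg, neg_mul_neg, sub_self]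

end KroneckerColumns

section KroneckerRelation

variable {𝕜 ι κ : Type*} [Field 𝕜] [StarRing 𝕜] [Fintype ι] [DecidableEq ι]

theorem exists_kronCol_relation_of_finrank_span_lt (v : ι → κ → 𝕜) {Γ₁ Γ₂ : Finset ι}
    (hdisj : Disjoint Γ₁ Γ₂) (hrank : finrank 𝕜 (span 𝕜 (Set.range v)) < #Γ₁ + #Γ₂) :
    ∃ N : ι × ι → 𝕜, N ≠ 0 ∧
      support N ⊆ (Γ₁ : Set ι) ×ˢ (Γ₁ : Set ι) ∪ (Γ₂ : Set ι) ×ˢ (Γ₂ : Set ι) ∧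
      ∑ p, N p • kronCol v p = 0 := by
  rw [← card_union_of_disjoint hdisj] at hrank
  obtain ⟨a, ha0, has, ha⟩ := not_linearIndependent_subtype_iff.mp
    (not_linearIndependent_subtype_of_finrank_span_lt v _ hrank)
  set b₁ := (Γ₁ : Set ι).indicator a
  set b₂ := (Γ₂ : Set ι).indicator a
  have hsplit : b₁ + b₂ = a := by
    have h := Set.indicator_union_of_disjoint (disjoint_coe.mpr hdisj) a
    rw [← coe_union, Set.indicator_eq_self.mpr has] at h
    exact h.symm
  refine ⟨outerProduct b₁ - outerProduct b₂, ?_, ?_, ?_⟩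
  · obtain ⟨i, hi⟩ := support_nonempty_iff.mpr ha0
    have hdiag : (outerProduct b₁ - outerProduct b₂) (i, i) ≠ 0 := by
      rcases mem_union.mp (has hi) with h | h
      · simpa [outerProduct, b₁, b₂, h, disjoint_left.mp hdisj h] using hi
      · simpa [outerProduct, b₁, b₂, h, disjoint_right.mp hdisj h] using hi
    exact fun h => hdiag (congrFun h (i, i))
  · refine (support_sub _ _).trans (Set.union_subset_union ?_ ?_) <;>
    exact (support_outerProduct_subset _).trans
      (Set.prod_mono Set.support_indicator_subset Set.support_indicator_subset)
  · refine sum_outerProduct_sub_smul_kronCol_eq_zero v ?_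
    simp only [← sum_add_distrib, ← add_smul]
    simpa [← hsplit] using ha

end KroneckerRelation

theorem gaborKronCol_eq_kronCol (L : ℕ) [NeZero L] (c : ZMod L → ℂ) :
    gaborKronCol L c = kronCol fun l : ZMod L × ZMod L => gaborAtom L c l.1 l.2 :=
  rfl

theorem stmt19_general (L : ℕ) [NeZero L] (c : ZMod L → ℂ)
    (Pat : Set ((ZMod L × ZMod L) × (ZMod L × ZMod L)))
    (Γ₁ Γ₂ : Finset (ZMod L × ZMod L)) (hdisj : Disjoint Γ₁ Γ₂)
    (hsub : (Γ₁ : Set (ZMod L × ZMod L)) ×ˢ (Γ₁ : Set (ZMod L × ZMod L)) ∪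
      (Γ₂ : Set (ZMod L × ZMod L)) ×ˢ (Γ₂ : Set (ZMod L × ZMod L)) ⊆ Pat)
    (hcard : L < Γ₁.card + Γ₂.card) :
    ¬ LinearIndependent ℂ (fun l : Pat => gaborKronCol L c l.val) := by
  classical
  have hrank : finrank ℂ (span ℂ (Set.range fun l : ZMod L × ZMod L => gaborAtom L c l.1 l.2))
      < #Γ₁ + #Γ₂ := by
    refine (Submodule.finrank_le _).trans_lt ?_
    rwa [finrank_fintype_fun_eq_card, ZMod.card]
  obtain ⟨N, hN0, hNsupp, hN⟩ := exists_kronCol_relation_of_finrank_span_lt _ hdisj hrank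
  rw [gaborKronCol_eq_kronCol]
  exact not_linearIndependent_subtype_iff.mpr ⟨N, hN0, hNsupp.trans hsub, hN⟩

/-- if the symmetric pattern `Pat` contains `Γ₁×Γ₁ ∪ Γ₂×Γ₂` with `Γ₁, Γ₂`
disjoint and `|Γ₁| + |Γ₂| > L`, then for every window `c` the columns of `conj G ⊗ G`
indexed by `Pat` are linearly dependent. -/
theorem stmt19 (L : ℕ) [NeZero L] (c : ZMod L → ℂ)
    (Pat : Set ((ZMod L × ZMod L) × (ZMod L × ZMod L)))
    (hsym : ∀ l l' : ZMod L × ZMod L, (l, l') ∈ Pat → (l', l) ∈ Pat)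
    (Γ₁ Γ₂ : Finset (ZMod L × ZMod L)) (hdisj : Disjoint Γ₁ Γ₂)
    (hsub : (Γ₁ : Set (ZMod L × ZMod L)) ×ˢ (Γ₁ : Set (ZMod L × ZMod L)) ∪
      (Γ₂ : Set (ZMod L × ZMod L)) ×ˢ (Γ₂ : Set (ZMod L × ZMod L)) ⊆ Pat)
    (hcard : L < Γ₁.card + Γ₂.card) :
    ¬ LinearIndependent ℂ (fun l : Pat => gaborKronCol L c l.val) :=
  stmt19_general L c Pat Γ₁ Γ₂ hdisj hsub hcard
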